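/- Let E be a real inner product space of finite dimension n ≥ 2, let p₀ ∈ E and r ≥ 0, and define d : E → ℝ by d(y) = ‖y − p₀‖ − r. Let x ≠ p₀, let φ : E → ℝ be twice continuously differentiable near x, let ψ : ℝ → ℝ be twice continuously differentiable, and set w := φ + ψ ∘ d. Write ∇ for gradient, ∇² for the Hessian bilinear form, and E_n := ∇d(x) = (x − p₀)/‖x − p₀‖. Then ∇²w(∇w, ∇w)(x) = ∇²φ(∇φ, ∇φ)(x) + ψ'(d(x))·[2∇²φ(E_n, ∇φ)(x) + ∇²d(∇φ, ∇φ)(x)] + (ψ'(d(x)))²·∇²φ(E_n, E_n)(x) + ψ''(d(x))·(⟨∇φ(x), E_n⟩ + ψ'(d(x)))². -/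

import Mathlib

open scoped RealInnerProductSpace
open Filter Topology

/-!
With `e = (x - p₀) / ‖x - p₀‖`, the chain rule gives `∇w = ∇φ + ψ'(d) e` and
`∇²w = ∇²φ + ψ'(d) ∇²d + ψ''(d) ⟪e, ·⟫ ⟪e, ·⟫`. The Hessian of the norm at `z ≠ 0` is
`‖z‖⁻¹ ⟪u, v⟫ - ‖z‖⁻³ ⟪z, u⟫ ⟪z, v⟫`, which vanishes as soon as one argument is radial; so
`∇²d` kills `e` in either slot. Expanding `∇²w(∇w, ∇w)` bilinearly and using `⟪e, e⟫ = 1` and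
the symmetry of `∇²φ` leaves exactly the stated terms.
-/

section SecondDerivative

variable {E : Type*} [NormedAddCommGroup E] [NormedSpace ℝ E]

theorem fderiv_fderiv_add_apply {f g : E → ℝ} {x : E} (hf : ContDiffAt ℝ 2 f x)
    (hg : ContDiffAt ℝ 2 g x) (u v : E) :
    fderiv ℝ (fderiv ℝ fun y => f y + g y) x u v =
      fderiv ℝ (fderiv ℝ f) x u v + fderiv ℝ (fderiv ℝ g) x u v := by
  have h := congr($(iteratedFDeriv_add_apply (i := 2) hf hg) ![u, v])
  simp only [add_apply, iteratedFDeriv_two_apply, Matrix.cons_val_zero, Matrix.cons_val_one] at h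
  exact h

theorem fderiv_fderiv_comp_apply {f : E → ℝ} {ψ : ℝ → ℝ} {x : E} (hf : ContDiffAt ℝ 2 f x)
    (hψ : ContDiffAt ℝ 2 ψ (f x)) (u v : E) :
    fderiv ℝ (fderiv ℝ fun y => ψ (f y)) x u v =
      deriv ψ (f x) * fderiv ℝ (fderiv ℝ f) x u v +
        deriv (deriv ψ) (f x) * fderiv ℝ f x u * fderiv ℝ f x v := by
  have hψ_near : ∀ᶠ y in 𝓝 x, DifferentiableAt ℝ ψ (f y) :=
    hf.continuousAt.eventually
      ((hψ.eventually (by simp)).mono fun t ht => ht.differentiableAt two_ne_zero)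
  have hf_near : ∀ᶠ y in 𝓝 x, DifferentiableAt ℝ f y :=
    (hf.eventually (by simp)).mono fun y hy => hy.differentiableAt two_ne_zero
  have hchain : fderiv ℝ (fun y => ψ (f y)) =ᶠ[𝓝 x] fun y => deriv ψ (f y) • fderiv ℝ f y := by
    filter_upwards [hψ_near, hf_near] with y hψy hfy
    exact (hψy.hasDerivAt.comp_hasFDerivAt y hfy.hasFDerivAt).fderiv
  have hψ' : HasDerivAt (deriv ψ) (deriv (deriv ψ) (f x)) (f x) :=
    (((hψ.fderiv_right (m := 1) le_rfl).differentiableAt one_ne_zero).clm_apply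
      (differentiableAt_const 1)).hasDerivAt
  have hf' : HasFDerivAt (fderiv ℝ f) (fderiv ℝ (fderiv ℝ f) x) x :=
    ((hf.fderiv_right (m := 1) le_rfl).differentiableAt one_ne_zero).hasFDerivAt
  have hprod : HasFDerivAt (fun y => deriv ψ (f y) • fderiv ℝ f y) _ x :=
    (hψ'.comp_hasFDerivAt x hf_near.self_of_nhds.hasFDerivAt).smul hf'
  rw [hchain.fderiv_eq, hprod.fderiv]
  simp only [add_apply, smul_apply, ContinuousLinearMap.smulRight_apply, smul_eq_mul,
    Function.comp_apply]

end SecondDerivative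

theorem HasGradientAt.add {𝕜 F : Type*} [RCLike 𝕜] [NormedAddCommGroup F]
    [InnerProductSpace 𝕜 F] [CompleteSpace F] {f g : F → 𝕜} {f' g' x : F}
    (hf : HasGradientAt f f' x) (hg : HasGradientAt g g' x) :
    HasGradientAt (fun y => f y + g y) (f' + g') x := by
  rw [hasGradientAt_iff_hasFDerivAt, map_add] at *
  exact hf.add hg

section RealInnerProductSpace

variable {F : Type*} [NormedAddCommGroup F] [InnerProductSpace ℝ F]

theorem HasDerivAt.comp_hasGradientAt [CompleteSpace F] {f : F → ℝ} {ψ : ℝ → ℝ} {f' x : F}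
    {ψ' : ℝ} (hψ : HasDerivAt ψ ψ' (f x)) (hf : HasGradientAt f f' x) :
    HasGradientAt (fun y => ψ (f y)) (ψ' • f') x := by
  rw [hasGradientAt_iff_hasFDerivAt, map_smul] at *
  exact hψ.comp_hasFDerivAt x hf

theorem hasFDerivAt_norm_of_ne_zero {x : F} (hx : x ≠ 0) :
    HasFDerivAt (‖·‖) (innerSL ℝ (‖x‖⁻¹ • x)) x := by
  have h := (hasStrictFDerivAt_norm_sq x).hasFDerivAt.sqrt (by positivity)
  simp only [Real.sqrt_sq (norm_nonneg _)] at h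
  refine h.congr_fderiv ?_
  ext v
  simp only [smul_apply, innerSL_apply_apply, real_inner_smul_left, smul_eq_mul, nsmul_eq_mul]
  ring

theorem fderiv_fderiv_norm_apply {x : F} (hx : x ≠ 0) (u v : F) :
    fderiv ℝ (fderiv ℝ (‖·‖)) x u v = ‖x‖⁻¹ * ⟪u, v⟫ - (‖x‖ ^ 3)⁻¹ * (⟪x, u⟫ * ⟪x, v⟫) := by
  have hx' : ‖x‖ ≠ 0 := norm_ne_zero_iff.2 hx
  have hfield : fderiv ℝ (‖·‖) =ᶠ[𝓝 x] fun y => innerSL ℝ (‖y‖⁻¹ • y) :=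
    (eventually_ne_nhds hx).mono fun y hy => (hasFDerivAt_norm_of_ne_zero hy).fderiv
  have hinv : HasFDerivAt (fun y : F => ‖y‖⁻¹) (-(‖x‖ ^ 2)⁻¹ • innerSL ℝ (‖x‖⁻¹ • x)) x :=
    (hasDerivAt_inv hx').comp_hasFDerivAt x (hasFDerivAt_norm_of_ne_zero hx)
  have hhess : HasFDerivAt (fun y : F => innerSL ℝ (‖y‖⁻¹ • y)) ((innerSL ℝ).comp
      (‖x‖⁻¹ • ContinuousLinearMap.id ℝ F + (-(‖x‖ ^ 2)⁻¹ • innerSL ℝ (‖x‖⁻¹ • x)).smulRight x)) x :=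
    (innerSL ℝ).hasFDerivAt.comp x (hinv.smul (hasFDerivAt_id x))
  rw [hfield.fderiv_eq, hhess.fderiv]
  simp only [ContinuousLinearMap.comp_apply, add_apply, smul_apply, ContinuousLinearMap.id_apply,
    ContinuousLinearMap.smulRight_apply, map_add, map_smul, innerSL_apply_apply, smul_eq_mul]
  field_simp
  ring

theorem fderiv_fderiv_norm_apply_self_left {x : F} (hx : x ≠ 0) (v : F) :
    fderiv ℝ (fderiv ℝ (‖·‖)) x x v = 0 := by
  have : ‖x‖ ≠ 0 := norm_ne_zero_iff.2 hx
  rw [fderiv_fderiv_norm_apply hx, real_inner_self_eq_norm_sq]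
  field_simp
  ring

theorem fderiv_fderiv_norm_apply_self_right {x : F} (hx : x ≠ 0) (u : F) :
    fderiv ℝ (fderiv ℝ (‖·‖)) x u x = 0 := by
  have : ‖x‖ ≠ 0 := norm_ne_zero_iff.2 hx
  rw [fderiv_fderiv_norm_apply hx, real_inner_self_eq_norm_sq, real_inner_comm]
  field_simp
  ring

theorem fderiv_fderiv_norm_sub_sub_const (p : F) (r : ℝ) (x : F) :
    fderiv ℝ (fderiv ℝ fun y => ‖y - p‖ - r) x = fderiv ℝ (fderiv ℝ (‖·‖)) (x - p) := by
  have h : fderiv ℝ (fun y => ‖y - p‖ - r) = fun y => fderiv ℝ (‖·‖) (y - p) := by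
    funext y
    rw [fderiv_sub_const, fderiv_comp_sub (f := (‖·‖))]
  rw [h, fderiv_comp_sub (f := fderiv ℝ (‖·‖))]

theorem hasGradientAt_norm_sub_sub_const [CompleteSpace F] {p x : F} (r : ℝ) (hx : x ≠ p) :
    HasGradientAt (fun y => ‖y - p‖ - r) (‖x - p‖⁻¹ • (x - p)) x := by
  rw [hasGradientAt_iff_hasFDerivAt]
  exact ((hasFDerivAt_comp_sub (f := (‖·‖)) p).2
    (hasFDerivAt_norm_of_ne_zero (sub_ne_zero.2 hx))).sub_const r

end RealInnerProductSpace

theorem stmt_17_general {E : Type*} [NormedAddCommGroup E] [InnerProductSpace ℝ E]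
    [FiniteDimensional ℝ E]
    (p₀ x : E) (r : ℝ) (hx : x ≠ p₀)
    (d : E → ℝ) (hd : d = fun y => ‖y - p₀‖ - r)
    (φ : E → ℝ) (hφ : ContDiffAt ℝ 2 φ x)
    (ψ : ℝ → ℝ) (hψ : ContDiff ℝ 2 ψ)
    (w : E → ℝ) (hw : w = fun y => φ y + ψ (d y))
    (En : E) (hEn : En = ‖x - p₀‖⁻¹ • (x - p₀)) :
    fderiv ℝ (fderiv ℝ w) x (gradient w x) (gradient w x) =
      fderiv ℝ (fderiv ℝ φ) x (gradient φ x) (gradient φ x) +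
        deriv ψ (d x) *
          (2 * fderiv ℝ (fderiv ℝ φ) x En (gradient φ x) +
            fderiv ℝ (fderiv ℝ d) x (gradient φ x) (gradient φ x)) +
        (deriv ψ (d x)) ^ 2 * fderiv ℝ (fderiv ℝ φ) x En En +
        deriv (deriv ψ) (d x) * (⟪gradient φ x, En⟫ + deriv ψ (d x)) ^ 2 := by
  have hxp : x - p₀ ≠ 0 := sub_ne_zero.2 hx
  have hd_grad : HasGradientAt d En x := hd ▸ hEn ▸ hasGradientAt_norm_sub_sub_const r hx
  have hd_smooth : ContDiffAt ℝ 2 d x :=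
    hd ▸ ((contDiffAt_id.sub contDiffAt_const).norm ℝ hxp).sub contDiffAt_const
  have hw_grad : gradient w x = gradient φ x + deriv ψ (d x) • En :=
    hw ▸ ((hφ.differentiableAt two_ne_zero).hasGradientAt.add
      ((hψ.differentiable two_ne_zero (d x)).hasDerivAt.comp_hasGradientAt hd_grad)).gradient
  have hw_hess (u v : E) : fderiv ℝ (fderiv ℝ w) x u v = fderiv ℝ (fderiv ℝ φ) x u v +
      (deriv ψ (d x) * fderiv ℝ (fderiv ℝ d) x u v +
        deriv (deriv ψ) (d x) * ⟪En, u⟫ * ⟪En, v⟫) := by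
    rw [hw, fderiv_fderiv_add_apply (g := fun y => ψ (d y)) hφ (hψ.contDiffAt.comp x hd_smooth),
      fderiv_fderiv_comp_apply hd_smooth hψ.contDiffAt, hd_grad.fderiv_apply, hd_grad.fderiv_apply]
  have hd_hess_left (v : E) : fderiv ℝ (fderiv ℝ d) x En v = 0 := by
    rw [hd, fderiv_fderiv_norm_sub_sub_const, hEn, map_smul, smul_apply,
      fderiv_fderiv_norm_apply_self_left hxp, smul_zero]
  have hd_hess_right (u : E) : fderiv ℝ (fderiv ℝ d) x u En = 0 := by
    rw [hd, fderiv_fderiv_norm_sub_sub_const, hEn, map_smul,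
      fderiv_fderiv_norm_apply_self_right hxp, smul_zero]
  have hEn_unit : ⟪En, En⟫ = 1 := by
    have : ‖x - p₀‖ ≠ 0 := norm_ne_zero_iff.2 hxp
    rw [hEn, real_inner_smul_left, real_inner_smul_right, real_inner_self_eq_norm_sq]
    field_simp
  rw [hw_grad]
  simp only [hw_hess, map_add, map_smul, add_apply, smul_apply, smul_eq_mul, hd_hess_left,
    hd_hess_right, hEn_unit, real_inner_comm En (gradient φ x)]
  rw [(hφ.isSymmSndFDerivAt (by simp)).eq En (gradient φ x)]
  ring

/-- Euclidean instance of Lemma 2 (LbHw): the formula (Hw) for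
`∇²w(∇w, ∇w)` at `x`, where `w = φ + ψ ∘ d` and `d(y) = ‖y - p₀‖ - r`. -/
theorem stmt_17 {E : Type*} [NormedAddCommGroup E] [InnerProductSpace ℝ E]
    [FiniteDimensional ℝ E] (n : ℕ) (hn : 2 ≤ n)
    (hdim : Module.finrank ℝ E = n)
    (p₀ x : E) (r : ℝ) (hr : 0 ≤ r) (hx : x ≠ p₀)
    (d : E → ℝ) (hd : d = fun y => ‖y - p₀‖ - r)
    (φ : E → ℝ) (hφ : ContDiffAt ℝ 2 φ x)
    (ψ : ℝ → ℝ) (hψ : ContDiff ℝ 2 ψ)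
    (w : E → ℝ) (hw : w = fun y => φ y + ψ (d y))
    (En : E) (hEn : En = ‖x - p₀‖⁻¹ • (x - p₀)) :
    fderiv ℝ (fderiv ℝ w) x (gradient w x) (gradient w x) =
      fderiv ℝ (fderiv ℝ φ) x (gradient φ x) (gradient φ x) +
        deriv ψ (d x) *
          (2 * fderiv ℝ (fderiv ℝ φ) x En (gradient φ x) +
            fderiv ℝ (fderiv ℝ d) x (gradient φ x) (gradient φ x)) +
        (deriv ψ (d x)) ^ 2 * fderiv ℝ (fderiv ℝ φ) x En En +
        deriv (deriv ψ) (d x) * (⟪gradient φ x, En⟫ + deriv ψ (d x)) ^ 2 :=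
  stmt_17_general p₀ x r hx d hd φ hφ ψ hψ w hw En hEn
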